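/- arXiv:1202.2707 — 2 statements merged into one kernel-verified Lean document; each statement's English description precedes it below -/
import Mathlib

section
/- Let $\mu_0>0$, $L_G\ge0$, $\tau_0>0$, $\beta\in[0,1)$. Consider nonnegative numbers $d_k$ (for $k\ge l_0+1$) satisfying $d_k\le \frac{1}{(1+\mu_0\tau)^{(1-\beta)(k-l_0)}((k-l_0)\tau)^{\beta}}+L_G\tau\sum_{l=l_0+1}^{k-1}\frac{(1+L_G\tau)^{l-l_0}}{(1+\mu_0\tau)^{(1-\beta)(k-l)}((k-l)\tau)^\beta}$ for $0<\tau\le\tau_0$. Then there is $C>0$ (depending on $\mu_0,L_G,\tau_0,\beta$ only) with $d_k\le C(1+L_G\tau)^{k-l_0}\left(1+\frac{1}{(1+\mu_0\tau)^{(1-\beta)(k-l_0)}((k-l_0)\tau)^\beta}\right)$, using that $\tau\sum_{l=1}^{\infty}\frac{1}{(1+\mu_0\tau)^{(1-\beta)l}(l\tau)^\beta}\le C$ uniformly for $\tau\le\tau_0$. -/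
open Real Finset

/-!
Bounding `(1 + L_G τ)^(l - l₀)` by `(1 + L_G τ)^(k - l₀)` reduces everything to a uniform bound on
`τ ∑_{0<j<M} (1 + μ₀τ)^(-(1-β)j) (jτ)^(-β)`. The terms with `jτ ≤ 1` contribute at most
`τ^(1-β) ∑_{j ≤ 1/τ} j^(-β) ≤ 1/(1-β)` (concavity of `t^(1-β)`), the terms with `jτ > 1` at most
a geometric series of ratio `c = (1 + μ₀τ)^(-(1-β))`, and Bernoulli's inequality gives
`1 - c ≥ (1-β)μ₀τ/(1 + μ₀τ)`, so that `τ/(1 - c)` stays bounded as `τ → 0`.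
-/

theorem mul_rpow_sub_one_le_rpow_sub_rpow {p x : ℝ} (hp0 : 0 ≤ p) (hp1 : p ≤ 1) (hx : 1 ≤ x) :
    p * x ^ (p - 1) ≤ x ^ p - (x - 1) ^ p := by
  have hx0 : 0 < x := by linarith
  have hinv : x⁻¹ ≤ 1 := inv_le_one_of_one_le₀ hx
  have hbern : (1 + -x⁻¹) ^ p ≤ 1 + p * -x⁻¹ :=
    rpow_one_add_le_one_add_mul_self (by linarith) hp0 hp1
  have hfactor : (x - 1) ^ p = (1 + -x⁻¹) ^ p * x ^ p := by
    rw [← mul_rpow (by linarith) hx0.le]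
    congr 1
    field_simp
    ring
  have hscaled := mul_le_mul_of_nonneg_right hbern (rpow_nonneg hx0.le p)
  rw [rpow_sub_one hx0.ne', hfactor, div_eq_mul_inv]
  linarith

theorem sum_Icc_rpow_neg_le {β : ℝ} (hβ0 : 0 ≤ β) (hβ1 : β < 1) (N : ℕ) :
    ∑ j ∈ Icc 1 N, (j : ℝ) ^ (-β) ≤ (N : ℝ) ^ (1 - β) / (1 - β) := by
  have hp : 0 < 1 - β := by linarith
  induction N with
  | zero => simp [zero_rpow hp.ne']
  | succ n ih =>
    have step := mul_rpow_sub_one_le_rpow_sub_rpow (x := n + 1) hp.le (by linarith)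
      (by simp)
    rw [sub_sub_cancel_left, add_sub_cancel_right] at step
    rw [sum_Icc_succ_top (by omega), Nat.cast_succ]
    rw [le_div_iff₀ hp] at ih ⊢
    linarith

theorem sum_Ioo_comp_natCast_sub {M : Type*} [AddCommMonoid M] (f : ℝ → M) (a b : ℕ) :
    ∑ l ∈ Ioo a b, f ((b : ℝ) - l) = ∑ j ∈ Ioo 0 (b - a), f j := by
  refine sum_nbij' (b - ·) (b - ·) ?_ ?_ ?_ ?_ ?_ <;> intro l hl <;> simp only [mem_Ioo] at hl ⊢
  · omega
  · omega
  · omega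
  · omega
  · rw [Nat.cast_sub hl.2.le]

theorem one_add_rpow_neg_le {s p : ℝ} (hs : 0 ≤ s) (hp0 : 0 ≤ p) (hp1 : p ≤ 1) :
    (1 + s) ^ (-p) ≤ 1 - p * s / (1 + s) := by
  have hinv : (1 + s)⁻¹ = 1 + -(s / (1 + s)) := by field_simp; ring
  have hle : s / (1 + s) ≤ 1 := (div_le_one (by positivity)).2 (by linarith)
  rw [rpow_neg (by positivity), ← inv_rpow (by positivity), hinv, mul_div_assoc]
  linarith [rpow_one_add_le_one_add_mul_self (s := -(s / (1 + s))) (by linarith) hp0 hp1]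

section KernelSum

variable {μ τ β : ℝ}

theorem kernel_sum_of_mul_le_one (hτ : 0 < τ) (hμ : 0 ≤ μ) (hβ0 : 0 ≤ β) (hβ1 : β < 1)
    (s : Finset ℕ) (hs : ∀ j ∈ s, 0 < j ∧ (j : ℝ) * τ ≤ 1) :
    τ * ∑ j ∈ s, 1 / ((1 + μ * τ) ^ ((1 - β) * j) * (j * τ) ^ β) ≤ 1 / (1 - β) := by
  have hp : 0 < 1 - β := by linarith
  set N := ⌊τ⁻¹⌋₊
  have hNτ : τ * N ≤ 1 := by
    calc τ * N ≤ τ * τ⁻¹ := by gcongr; exact Nat.floor_le (by positivity)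
      _ = 1 := mul_inv_cancel₀ hτ.ne'
  have hsub : s ⊆ Icc 1 N := fun j hj => mem_Icc.2
    ⟨(hs j hj).1, Nat.le_floor (by rw [← one_div, le_div_iff₀ hτ]; exact (hs j hj).2)⟩
  have hterm : ∀ j ∈ s, τ * (1 / ((1 + μ * τ) ^ ((1 - β) * j) * (j * τ) ^ β))
      ≤ τ ^ (1 - β) * (j : ℝ) ^ (-β) := by
    intro j hj
    have hj0 : (0 : ℝ) < j := by exact_mod_cast (hs j hj).1
    have hone : 1 ≤ (1 + μ * τ) ^ ((1 - β) * j) :=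
      one_le_rpow (by nlinarith) (by positivity)
    calc τ * (1 / ((1 + μ * τ) ^ ((1 - β) * j) * (j * τ) ^ β)) ≤ τ * (1 / (j * τ) ^ β) := by
          gcongr; exact le_mul_of_one_le_left (by positivity) hone
      _ = τ ^ (1 - β) * (j : ℝ) ^ (-β) := by
          rw [mul_rpow hj0.le hτ.le, rpow_neg hj0.le, rpow_sub hτ, rpow_one]; field_simp
  calc τ * ∑ j ∈ s, 1 / ((1 + μ * τ) ^ ((1 - β) * j) * (j * τ) ^ β)
      ≤ ∑ j ∈ s, τ ^ (1 - β) * (j : ℝ) ^ (-β) := by rw [mul_sum]; exact sum_le_sum hterm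
    _ ≤ ∑ j ∈ Icc 1 N, τ ^ (1 - β) * (j : ℝ) ^ (-β) :=
        sum_le_sum_of_subset_of_nonneg hsub fun _ _ _ => by positivity
    _ ≤ τ ^ (1 - β) * ((N : ℝ) ^ (1 - β) / (1 - β)) := by
        rw [← mul_sum]; gcongr; exact sum_Icc_rpow_neg_le hβ0 hβ1 N
    _ = (τ * N) ^ (1 - β) / (1 - β) := by rw [mul_rpow hτ.le N.cast_nonneg, mul_div_assoc]
    _ ≤ 1 / (1 - β) := by gcongr; exact rpow_le_one (by positivity) hNτ hp.le

theorem kernel_sum_of_one_le_mul (hτ : 0 < τ) (hμ : 0 < μ) (hβ0 : 0 ≤ β) (hβ1 : β < 1)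
    (s : Finset ℕ) (hs : ∀ j ∈ s, 1 ≤ (j : ℝ) * τ) :
    τ * ∑ j ∈ s, 1 / ((1 + μ * τ) ^ ((1 - β) * j) * (j * τ) ^ β)
      ≤ (1 + μ * τ) / ((1 - β) * μ) := by
  have hp : 0 < 1 - β := by linarith
  have ha : 0 < 1 + μ * τ := by positivity
  set c := (1 + μ * τ) ^ (-(1 - β))
  have hc0 : 0 ≤ c := by positivity
  have hgap : (1 - β) * (μ * τ) / (1 + μ * τ) ≤ 1 - c := by
    linarith [one_add_rpow_neg_le (by positivity : 0 ≤ μ * τ) hp.le (by linarith : 1 - β ≤ 1)]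
  have hc1 : c < 1 := by
    have : 0 < (1 - β) * (μ * τ) / (1 + μ * τ) := by positivity
    linarith
  have hterm : ∀ j ∈ s, 1 / ((1 + μ * τ) ^ ((1 - β) * j) * (j * τ) ^ β) ≤ c ^ j := by
    intro j hj
    calc 1 / ((1 + μ * τ) ^ ((1 - β) * j) * (j * τ) ^ β) ≤ 1 / (1 + μ * τ) ^ ((1 - β) * j) := by
          gcongr; exact le_mul_of_one_le_right (by positivity) (one_le_rpow (hs j hj) hβ0)
      _ = c ^ j := by
          rw [← rpow_natCast, ← rpow_mul ha.le, one_div, ← rpow_neg ha.le, neg_mul]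
  calc τ * ∑ j ∈ s, 1 / ((1 + μ * τ) ^ ((1 - β) * j) * (j * τ) ^ β)
      ≤ τ * ∑ j ∈ s, c ^ j := by gcongr with j hj; exact hterm j hj
    _ ≤ τ * (1 - c)⁻¹ := by
        gcongr
        rw [← tsum_geometric_of_lt_one hc0 hc1]
        exact (summable_geometric_of_lt_one hc0 hc1).sum_le_tsum s fun _ _ => by positivity
    _ ≤ τ * ((1 - β) * (μ * τ) / (1 + μ * τ))⁻¹ := by gcongr
    _ = (1 + μ * τ) / ((1 - β) * μ) := by field_simp

theorem kernel_sum_le {τ₀ : ℝ} (hμ : 0 < μ) (hβ0 : 0 ≤ β) (hβ1 : β < 1) (hτ : 0 < τ)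
    (hττ₀ : τ ≤ τ₀) (M : ℕ) :
    τ * ∑ j ∈ Ioo 0 M, 1 / ((1 + μ * τ) ^ ((1 - β) * j) * (j * τ) ^ β)
      ≤ 1 / (1 - β) + (1 + μ * τ₀) / ((1 - β) * μ) := by
  have hp : 0 < 1 - β := by linarith
  rw [← sum_filter_add_sum_filter_not _ (fun j : ℕ => (j : ℝ) * τ ≤ 1), mul_add]
  gcongr ?_ + ?_
  · refine kernel_sum_of_mul_le_one hτ hμ.le hβ0 hβ1 _ fun j hj => ?_
    simp only [mem_filter, mem_Ioo] at hj
    exact ⟨hj.1.1, hj.2⟩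
  · calc _ ≤ (1 + μ * τ) / ((1 - β) * μ) := by
          refine kernel_sum_of_one_le_mul hτ hμ hβ0 hβ1 _ fun j hj => ?_
          simp only [mem_filter, not_le] at hj
          exact hj.2.le
      _ ≤ (1 + μ * τ₀) / ((1 - β) * μ) := by gcongr

end KernelSum

theorem le_of_le_kernel_add_convolution {D : ℝ → ℝ} {τ L q S d : ℝ} {l₀ k : ℕ}
    (hD : ∀ t, 0 < t → 0 ≤ D t) (hτ : 0 ≤ τ) (hL : 0 ≤ L) (hq : 1 ≤ q) (hlk : l₀ < k)
    (hS : τ * ∑ l ∈ Ioo l₀ k, 1 / D (k - l) ≤ S)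
    (hd : d ≤ 1 / D (k - l₀) + L * τ * ∑ l ∈ Ioo l₀ k, q ^ (l - l₀) / D (k - l)) :
    d ≤ (1 + L * S) * q ^ (k - l₀) * (1 + 1 / D (k - l₀)) := by
  have hDk : ∀ l < k, 0 ≤ D ((k : ℝ) - l) := fun l hl =>
    hD _ (by rw [sub_pos]; exact_mod_cast hl)
  set P := q ^ (k - l₀)
  set f := 1 / D ((k : ℝ) - l₀)
  have hP : 1 ≤ P := one_le_pow₀ hq
  have hf : 0 ≤ f := one_div_nonneg.2 (hDk l₀ hlk)
  have hS0 : 0 ≤ S := le_trans (mul_nonneg hτ (sum_nonneg fun l hl =>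
    one_div_nonneg.2 (hDk l (mem_Ioo.1 hl).2))) hS
  have hconv : L * τ * ∑ l ∈ Ioo l₀ k, q ^ (l - l₀) / D (k - l) ≤ L * P * S := by
    calc L * τ * ∑ l ∈ Ioo l₀ k, q ^ (l - l₀) / D (k - l)
        ≤ L * τ * ∑ l ∈ Ioo l₀ k, P * (1 / D (k - l)) := by
          gcongr with l hl
          rw [mul_one_div]
          have hl := mem_Ioo.1 hl
          exact div_le_div_of_nonneg_right (pow_le_pow_right₀ hq (by omega)) (hDk l hl.2)
      _ = L * P * (τ * ∑ l ∈ Ioo l₀ k, 1 / D (k - l)) := by rw [← mul_sum]; ring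
      _ ≤ L * P * S := by gcongr
  have hPf : f ≤ P * f := le_mul_of_one_le_left hf hP
  have hLSPf : 0 ≤ L * S * P * f := by positivity
  linarith

/-- Recursive bound behind the Malliavin derivative estimate: if nonnegative `d k`
(for `k > l₀`) satisfy
`d k ≤ (1+μ₀τ)^(-(1-β)(k-l₀)) ((k-l₀)τ)^(-β) + L_G τ ∑_{l=l₀+1}^{k-1} (1+L_Gτ)^(l-l₀) (1+μ₀τ)^(-(1-β)(k-l)) ((k-l)τ)^(-β)`,
then `d k ≤ C (1+L_Gτ)^(k-l₀) (1 + (1+μ₀τ)^(-(1-β)(k-l₀)) ((k-l₀)τ)^(-β))`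
with `C` depending only on `μ₀, L_G, τ₀, β`. -/
theorem stmt15 (μ₀ L_G τ₀ β : ℝ) (hμ₀ : 0 < μ₀) (hL : 0 ≤ L_G) (hτ₀ : 0 < τ₀)
    (hβ0 : 0 ≤ β) (hβ1 : β < 1) :
    ∃ C > 0, ∀ τ : ℝ, 0 < τ → τ ≤ τ₀ → ∀ l₀ : ℕ, ∀ d : ℕ → ℝ,
      (∀ k, l₀ < k → 0 ≤ d k) →
      (∀ k, l₀ < k → d k ≤
        1 / ((1 + μ₀ * τ) ^ ((1 - β) * ((k : ℝ) - l₀)) * (((k : ℝ) - l₀) * τ) ^ β) +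
        L_G * τ * ∑ l ∈ Finset.Ioo l₀ k,
          (1 + L_G * τ) ^ ((l : ℕ) - l₀) /
            ((1 + μ₀ * τ) ^ ((1 - β) * ((k : ℝ) - l)) * (((k : ℝ) - l) * τ) ^ β)) →
      ∀ k, l₀ < k → d k ≤
        C * (1 + L_G * τ) ^ ((k : ℕ) - l₀) *
          (1 + 1 / ((1 + μ₀ * τ) ^ ((1 - β) * ((k : ℝ) - l₀)) *
            (((k : ℝ) - l₀) * τ) ^ β)) := by
  have hp : 0 < 1 - β := by linarith
  refine ⟨1 + L_G * (1 / (1 - β) + (1 + μ₀ * τ₀) / ((1 - β) * μ₀)), by positivity, ?_⟩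
  intro τ hτ hττ₀ l₀ d _ hrec k hk
  refine le_of_le_kernel_add_convolution
    (D := fun t => (1 + μ₀ * τ) ^ ((1 - β) * t) * (t * τ) ^ β) (fun t ht => by positivity)
    hτ.le hL (le_add_of_nonneg_right (by positivity)) hk ?_ (hrec k hk)
  rw [sum_Ioo_comp_natCast_sub (fun t => 1 / ((1 + μ₀ * τ) ^ ((1 - β) * t) * (t * τ) ^ β))]
  exact kernel_sum_le hμ₀ hβ0 hβ1 hτ hττ₀ (k - l₀)
end

section
/- Let $\tilde\mu>0$, $\kappa\in(0,1/2)$, and $T=m\tau$ with $m\ge2$, $\tau>0$. Then $\sum_{k=1}^{m-1}\frac{1}{(k\tau)^{1-\kappa}}\int_{k\tau}^{(k+1)\tau}\left(1+\frac{1}{(T-t)^{1/2-\kappa}}\right)e^{-\tilde\mu(T-t)}dt\le C\,T^{-(1/2-2\kappa)}\int_0^1 s^{\kappa-1}(1-s)^{\kappa-1/2}ds + C'$, i.e. the sum is bounded by $C_\kappa(1+T^{-(1/2-2\kappa)})$ with constants independent of $m$ and $\tau$. -/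
/-!
Each weight `(kτ)^{-(1-κ)}` is at most twice `t^{-(1-κ)}` on `[kτ, (k+1)τ]`, so the sum is at
most twice `∫_τ^T t^{-(1-κ)} (1 + (T-t)^{-(1/2-κ)}) e^{-μ̃(T-t)} dt`. Since `s ↦ s^{1/2-κ} e^{-μ̃ s}`
is bounded, the integrand is at most a constant times the Beta kernel
`t^{-(1-κ)} (T-t)^{-(1/2-κ)}`, whose integral over `[0, T]` is of order `T^{2κ-1/2}`: on each half
of `[0, T]` one factor is bounded by its value at `T/2` and the other is integrated explicitly.
-/

open Real Finset intervalIntegral MeasureTheory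

lemma intervalIntegral_mono_of_nonneg_on_Ioo {f g : ℝ → ℝ} {a b : ℝ} (hab : a ≤ b)
    (hf : ∀ x ∈ Set.Ioo a b, 0 ≤ f x) (hfg : ∀ x ∈ Set.Ioo a b, f x ≤ g x)
    (hg : IntervalIntegrable g volume a b) : ∫ x in a..b, f x ≤ ∫ x in a..b, g x := by
  simp only [integral_of_le hab, integral_Ioc_eq_integral_Ioo]
  exact setIntegral_mono_of_nonneg hf hfg (hg.1.mono_set Set.Ioo_subset_Ioc_self)

lemma rpow_neg_le_two_mul_rpow_neg {x t α : ℝ} (hx : 0 < x) (hxt : x ≤ t) (htx : t ≤ 2 * x)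
    (hα : α ≤ 1) : x ^ (-α) ≤ 2 * t ^ (-α) := by
  have ht : 0 < t := hx.trans_le hxt
  rcases le_total α 0 with hα0 | hα0
  · calc x ^ (-α) ≤ t ^ (-α) := rpow_le_rpow hx.le hxt (neg_nonneg.2 hα0)
      _ ≤ 2 * t ^ (-α) := le_mul_of_one_le_left (rpow_nonneg ht.le _) one_le_two
  · have h2 : (2 : ℝ) ^ α ≤ 2 := by
      simpa using rpow_le_rpow_of_exponent_le one_le_two hα
    calc x ^ (-α) = 2 ^ α * (2 * x) ^ (-α) := by
          rw [mul_rpow zero_le_two hx.le, ← mul_assoc, ← rpow_add two_pos, add_neg_cancel,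
            rpow_zero, one_mul]
      _ ≤ 2 * t ^ (-α) :=
          mul_le_mul h2 (rpow_le_rpow_of_nonpos ht htx (neg_nonpos.2 hα0))
            (rpow_nonneg (by positivity) _) zero_le_two

lemma mul_exp_neg_mul_le_inv {μ s : ℝ} (hμ : 0 < μ) : s * exp (-μ * s) ≤ μ⁻¹ := by
  have h := mul_exp_neg_le_exp_neg_one (μ * s)
  have h1 : exp (-1) ≤ 1 := exp_le_one_iff.2 (by norm_num)
  have hμs : s * exp (-μ * s) = μ⁻¹ * (μ * s * exp (-(μ * s))) := by
    rw [neg_mul]; field_simp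
  rw [hμs]
  exact mul_le_of_le_one_right (inv_pos.2 hμ).le (h.trans h1)

lemma exp_neg_mul_le_rpow_neg {μ β s : ℝ} (hμ : 0 < μ) (hβ0 : 0 ≤ β) (hβ1 : β ≤ 1)
    (hs : 0 < s) : exp (-μ * s) ≤ (1 + μ⁻¹) * s ^ (-β) := by
  have hsβ : s ^ β ≤ 1 + s :=
    (rpow_le_rpow hs.le (by linarith) hβ0).trans (rpow_le_self_of_one_le (by linarith) hβ1)
  have hbounded : s ^ β * exp (-μ * s) ≤ 1 + μ⁻¹ := by
    have := mul_exp_neg_mul_le_inv (s := s) hμ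
    have := exp_le_one_iff.2 (by nlinarith : -μ * s ≤ 0)
    nlinarith [exp_pos (-μ * s)]
  calc exp (-μ * s) = s ^ (-β) * (s ^ β * exp (-μ * s)) := by
        rw [← mul_assoc, ← rpow_add hs, neg_add_cancel, rpow_zero, one_mul]
    _ ≤ s ^ (-β) * (1 + μ⁻¹) := by gcongr
    _ = (1 + μ⁻¹) * s ^ (-β) := mul_comm _ _

lemma one_add_rpow_neg_mul_exp_le {μ β s : ℝ} (hμ : 0 < μ) (hβ0 : 0 ≤ β) (hβ1 : β ≤ 1)
    (hs : 0 < s) : (1 + s ^ (-β)) * exp (-μ * s) ≤ (2 + μ⁻¹) * s ^ (-β) := by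
  have hexp := exp_neg_mul_le_rpow_neg hμ hβ0 hβ1 hs
  have hexp1 : exp (-μ * s) ≤ 1 := exp_le_one_iff.2 (by nlinarith)
  have hpow : 0 ≤ s ^ (-β) := rpow_nonneg hs.le _
  nlinarith

noncomputable def betaKernel (α β T t : ℝ) : ℝ := t ^ (-α) * (T - t) ^ (-β)

lemma rpow_neg_mul_one_add_rpow_neg_mul_exp_le_betaKernel {μ α β T t : ℝ} (hμ : 0 < μ)
    (hβ0 : 0 ≤ β) (hβ1 : β ≤ 1) (ht : 0 ≤ t) (htT : t < T) :
    t ^ (-α) * ((1 + (T - t) ^ (-β)) * exp (-μ * (T - t))) ≤ (2 + μ⁻¹) * betaKernel α β T t := by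
  calc t ^ (-α) * ((1 + (T - t) ^ (-β)) * exp (-μ * (T - t)))
      ≤ t ^ (-α) * ((2 + μ⁻¹) * (T - t) ^ (-β)) :=
        mul_le_mul_of_nonneg_left (one_add_rpow_neg_mul_exp_le hμ hβ0 hβ1 (sub_pos.2 htT))
          (rpow_nonneg ht _)
    _ = (2 + μ⁻¹) * betaKernel α β T t := by rw [betaKernel]; ring

lemma sum_Ico_rpow_neg_mul_integral_le {f G : ℝ → ℝ} {α τ : ℝ} {m : ℕ} (hα : α ≤ 1)
    (hτ : 0 < τ) (hm : 1 ≤ m) (hf : ∀ t ∈ Set.Ioo τ (m * τ), 0 ≤ f t)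
    (hfG : ∀ t ∈ Set.Ioo τ (m * τ), t ^ (-α) * f t ≤ G t)
    (hG : IntervalIntegrable G volume τ (m * τ)) :
    ∑ k ∈ Ico 1 m, ((k : ℝ) * τ) ^ (-α) * ∫ t in (k * τ)..((k + 1) * τ), f t
      ≤ 2 * ∫ t in τ..(m * τ), G t := by
  have hpiece : ∀ k ∈ Ico 1 m, Set.uIcc ((k : ℝ) * τ) ((k + 1) * τ) ⊆ Set.uIcc τ (m * τ) := by
    intro k hk
    obtain ⟨hk1, hkm⟩ := mem_Ico.1 hk
    have hk1' : (1 : ℝ) ≤ k := by exact_mod_cast hk1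
    have hkm' : (k : ℝ) + 1 ≤ m := by exact_mod_cast hkm
    apply Set.uIcc_subset_uIcc <;> rw [Set.mem_uIcc] <;> left <;> constructor <;> nlinarith
  calc ∑ k ∈ Ico 1 m, ((k : ℝ) * τ) ^ (-α) * ∫ t in (k * τ)..((k + 1) * τ), f t
      ≤ ∑ k ∈ Ico 1 m, ∫ t in (k * τ)..((k + 1) * τ), 2 * G t := by
        refine sum_le_sum fun k hk => ?_
        have hk1 : (1 : ℝ) ≤ k := by exact_mod_cast (mem_Ico.1 hk).1
        have hkm : (k : ℝ) + 1 ≤ m := by exact_mod_cast (mem_Ico.1 hk).2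
        have hsub : Set.Ioo ((k : ℝ) * τ) ((k + 1) * τ) ⊆ Set.Ioo τ (m * τ) := fun t ht =>
          ⟨by nlinarith [ht.1], by nlinarith [ht.2]⟩
        rw [← intervalIntegral.integral_const_mul]
        refine intervalIntegral_mono_of_nonneg_on_Ioo (by nlinarith)
          (fun t ht => mul_nonneg (rpow_nonneg (by positivity) _) (hf t (hsub ht)))
          (fun t ht => ?_) ((hG.const_mul 2).mono_set (hpiece k hk))
        calc ((k : ℝ) * τ) ^ (-α) * f t ≤ 2 * t ^ (-α) * f t := by
              gcongr
              · exact hf t (hsub ht)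
              · exact rpow_neg_le_two_mul_rpow_neg (by positivity) ht.1.le (by nlinarith [ht.2]) hα
          _ ≤ 2 * G t := by rw [mul_assoc]; gcongr; exact hfG t (hsub ht)
    _ = ∫ t in τ..(m * τ), 2 * G t := by
        have := sum_integral_adjacent_intervals_Ico (f := fun t => 2 * G t) (μ := volume)
          (a := fun k : ℕ => (k : ℝ) * τ) hm fun k hk => by
            simpa using (hG.const_mul 2).mono_set (hpiece k (by simpa using hk))
        simpa using this
    _ = 2 * ∫ t in τ..(m * τ), G t := intervalIntegral.integral_const_mul _ _

lemma betaKernel_sub (α β T t : ℝ) : betaKernel α β T (T - t) = betaKernel β α T t := by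
  simp only [betaKernel, sub_sub_cancel, mul_comm]

lemma betaKernel_nonneg (α β : ℝ) {T t : ℝ} (ht0 : 0 ≤ t) (htT : t ≤ T) :
    0 ≤ betaKernel α β T t :=
  mul_nonneg (rpow_nonneg ht0 _) (rpow_nonneg (sub_nonneg.2 htT) _)

section BetaKernel

variable {α β T : ℝ}

lemma intervalIntegrable_betaKernel_left_half (hα : α < 1) (hT : 0 < T) :
    IntervalIntegrable (betaKernel α β T) volume 0 (T / 2) := by
  refine (intervalIntegrable_rpow' (by linarith : -1 < -α)).mul_continuousOn ?_
  refine (continuousOn_const.sub continuousOn_id).rpow_const fun t ht => Or.inl (sub_pos.2 ?_).ne'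
  rw [Set.uIcc_of_le (by positivity)] at ht
  show t < T
  linarith [ht.2]

lemma integral_betaKernel_left_half_le (hα : α < 1) (hβ : 0 ≤ β) (hT : 0 < T) :
    ∫ t in (0 : ℝ)..(T / 2), betaKernel α β T t ≤ (T / 2) ^ (1 - α - β) / (1 - α) := by
  have hT2 : 0 < T / 2 := by positivity
  calc ∫ t in (0 : ℝ)..(T / 2), betaKernel α β T t
      ≤ ∫ t in (0 : ℝ)..(T / 2), (T / 2) ^ (-β) * t ^ (-α) := by
        refine integral_mono_on hT2.le (intervalIntegrable_betaKernel_left_half hα hT)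
          ((intervalIntegrable_rpow' (by linarith)).const_mul _) fun t ht => ?_
        rw [betaKernel, mul_comm]
        exact mul_le_mul_of_nonneg_right
          (rpow_le_rpow_of_nonpos hT2 (by linarith [ht.2]) (neg_nonpos.2 hβ)) (rpow_nonneg ht.1 _)
    _ = (T / 2) ^ (1 - α - β) / (1 - α) := by
        rw [intervalIntegral.integral_const_mul, integral_rpow (Or.inl (by linarith)),
          zero_rpow (by linarith), sub_zero, mul_div_assoc', ← rpow_add hT2]
        ring_nf

lemma intervalIntegrable_betaKernel (hα : α < 1) (hβ : β < 1) (hT : 0 < T) :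
    IntervalIntegrable (betaKernel α β T) volume 0 T := by
  have hright := (intervalIntegrable_betaKernel_left_half (β := α) hβ hT).comp_sub_left T
  simp only [betaKernel_sub, sub_zero, (by ring : T - T / 2 = T / 2)] at hright
  exact (intervalIntegrable_betaKernel_left_half hα hT).trans hright.symm

-- The exact value is `B(1-α, 1-β) T^{1-α-β}`, with `B` the Beta function.
lemma integral_betaKernel_le (hα0 : 0 ≤ α) (hα : α < 1) (hβ0 : 0 ≤ β) (hβ : β < 1)
    (hT : 0 < T) :
    ∫ t in (0 : ℝ)..T, betaKernel α β T t
      ≤ 2 * (1 / (1 - α) + 1 / (1 - β)) * T ^ (1 - α - β) := by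
  have hright : ∫ t in (T / 2)..T, betaKernel α β T t
      = ∫ t in (0 : ℝ)..(T / 2), betaKernel β α T t := by
    simp only [← betaKernel_sub α β, intervalIntegral.integral_comp_sub_left, sub_zero,
      (by ring : T - T / 2 = T / 2)]
  rw [← integral_add_adjacent_intervals (intervalIntegrable_betaKernel_left_half hα hT)
    ((intervalIntegrable_betaKernel hα hβ hT).mono_set
      (Set.uIcc_subset_uIcc (by simp [Set.mem_uIcc]; left; constructor <;> linarith)
        Set.right_mem_uIcc)), hright]
  have hl := integral_betaKernel_left_half_le hα hβ0 hT
  have hr := integral_betaKernel_left_half_le hβ hα0 hT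
  have hhalf : (T / 2) ^ (1 - α - β) ≤ 2 * T ^ (1 - α - β) := by
    have h := rpow_neg_le_two_mul_rpow_neg (x := T / 2) (t := T) (α := α + β - 1)
      (by positivity) (by linarith) (by linarith) (by linarith)
    rwa [(by ring : -(α + β - 1) = 1 - α - β)] at h
  rw [(by ring : 1 - β - α = 1 - α - β)] at hr
  calc _ ≤ (1 / (1 - α) + 1 / (1 - β)) * (T / 2) ^ (1 - α - β) :=
        (add_le_add hl hr).trans_eq (by ring)
    _ ≤ _ := by
        rw [mul_comm 2, mul_assoc]
        exact mul_le_mul_of_nonneg_left hhalf (by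
          have := sub_pos.2 hα; have := sub_pos.2 hβ; positivity)

end BetaKernel

/-- Singular convolution estimate: for `μ̃ > 0` and `κ ∈ (0,1/2)` there is `C > 0`,
independent of `m` and `τ`, such that with `T = mτ`,
`∑_{k=1}^{m-1} (kτ)^(-(1-κ)) ∫_{kτ}^{(k+1)τ} (1 + (T-t)^(-(1/2-κ))) e^{-μ̃(T-t)} dt
  ≤ C (1 + T^(-(1/2-2κ)))`. -/
theorem stmt16 (μt κ : ℝ) (hμ : 0 < μt) (hκ0 : 0 < κ) (hκ : κ < 1 / 2) :
    ∃ C > 0, ∀ m : ℕ, 2 ≤ m → ∀ τ : ℝ, 0 < τ →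
      ∑ k ∈ Finset.Ico 1 m,
        ((k : ℝ) * τ) ^ (-(1 - κ)) *
          ∫ t in ((k : ℝ) * τ)..(((k : ℝ) + 1) * τ),
            (1 + ((m : ℝ) * τ - t) ^ (-(1 / 2 - κ))) * Real.exp (-μt * ((m : ℝ) * τ - t))
      ≤ C * (1 + ((m : ℝ) * τ) ^ (-(1 / 2 - 2 * κ))) := by
  set c := 2 + μt⁻¹
  set B := 1 / κ + 1 / (κ + 1 / 2)
  refine ⟨4 * c * B, by positivity, fun m hm τ hτ => ?_⟩
  have hm1 : 1 ≤ m := by omega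
  set T := (m : ℝ) * τ
  have hτT : τ ≤ T := le_mul_of_one_le_left hτ.le (by exact_mod_cast hm1)
  have hT : 0 < T := hτ.trans_le hτT
  set K := betaKernel (1 - κ) (1 / 2 - κ) T
  have hK : IntervalIntegrable K volume 0 T :=
    intervalIntegrable_betaKernel (by linarith) (by linarith) hT
  have hbeta : ∫ t in (0 : ℝ)..T, K t ≤ 2 * B * T ^ (-(1 / 2 - 2 * κ)) := by
    have h := integral_betaKernel_le (α := 1 - κ) (β := 1 / 2 - κ) (by linarith) (by linarith)
      (by linarith) (by linarith) hT
    rwa [show 1 - (1 - κ) - (1 / 2 - κ) = -(1 / 2 - 2 * κ) by ring, show 1 - (1 - κ) = κ by ring,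
      show 1 - (1 / 2 - κ) = κ + 1 / 2 by ring] at h
  calc _ ≤ 2 * ∫ t in τ..T, c * K t :=
        sum_Ico_rpow_neg_mul_integral_le (by linarith) hτ hm1
          (fun t ht => by have := sub_pos.2 ht.2; positivity)
          (fun t ht => rpow_neg_mul_one_add_rpow_neg_mul_exp_le_betaKernel hμ (by linarith)
            (by linarith) (hτ.trans ht.1).le ht.2)
          ((hK.const_mul c).mono_set (Set.uIcc_subset_uIcc (by simp [Set.mem_uIcc, hτT, hτ.le])
            Set.right_mem_uIcc))
    _ ≤ 2 * ∫ t in (0 : ℝ)..T, c * K t := by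
        gcongr
        refine integral_mono_interval hτ.le hτT le_rfl
          (ae_restrict_of_forall_mem measurableSet_Ioc fun t ht => ?_) (hK.const_mul c)
        exact mul_nonneg (by positivity) (betaKernel_nonneg _ _ ht.1.le ht.2)
    _ ≤ 2 * c * (2 * B * T ^ (-(1 / 2 - 2 * κ))) := by
        rw [intervalIntegral.integral_const_mul, mul_assoc]
        gcongr
    _ ≤ 4 * c * B * (1 + T ^ (-(1 / 2 - 2 * κ))) := by
        nlinarith [show 0 ≤ c * B by positivity, rpow_nonneg hT.le (-(1 / 2 - 2 * κ))]
end
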